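/- Let ε* = ln( (−5 + 2·(6353 − 405√241)^{1/3} + 2·(6353 + 405√241)^{1/3}) / 27 ), and define α*(ε) = 1 − e^{−ε/2} if ε > ε* and α*(ε) = 0 if 0 < ε ≤ ε*. Then for every ε > 0, α = α*(ε) minimizes the worst-case noise variance of the Hybrid Mechanism: for every α ∈ [0,1], max_{t ∈ [−1,1]} σ²_H(t, ε, α*(ε)) ≤ max_{t ∈ [−1,1]} σ²_H(t, ε, α). -/

import Mathlib

open Real

/-- noise variance of the Piecewise Mechanism on input `t` with privacy budget `ε`. -/
noncomputable def pmVar (t ε : ℝ) : ℝ :=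
  t ^ 2 / (exp (ε / 2) - 1) + (exp (ε / 2) + 3) / (3 * (exp (ε / 2) - 1) ^ 2)

/-- noise variance of Duchi et al.'s one-dimensional mechanism on input `t`. -/
noncomputable def duchiVar (t ε : ℝ) : ℝ := ((exp ε + 1) / (exp ε - 1)) ^ 2 - t ^ 2

/-- noise variance of the Hybrid Mechanism (PM with probability `α`, Duchi with `1−α`). -/
noncomputable def hmVar (t ε α : ℝ) : ℝ := α * pmVar t ε + (1 - α) * duchiVar t ε

/-- worst-case (over `t ∈ [−1,1]`) noise variance of the Hybrid Mechanism. -/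
noncomputable def hmMaxVar (ε α : ℝ) : ℝ :=
  sSup ((fun t => hmVar t ε α) '' Set.Icc (-1 : ℝ) 1)

/-- `ε* = ln((−5 + 2·(6353 − 405√241)^{1/3} + 2·(6353 + 405√241)^{1/3}) / 27)`. -/
noncomputable def epsStar : ℝ :=
  Real.log ((-5 + 2 * (6353 - 405 * Real.sqrt 241) ^ ((1 : ℝ) / 3) +
      2 * (6353 + 405 * Real.sqrt 241) ^ ((1 : ℝ) / 3)) / 27)

/-- the optimal mixing probability `α*(ε)`. -/
noncomputable def alphaStar (ε : ℝ) : ℝ := if ε > epsStar then 1 - exp (-(ε / 2)) else 0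

/-!
Both variances are even quadratics in `t` and the hybrid variance is affine in `α`, so the worst
case over `t ∈ [-1, 1]` is `max (σ²_H(1)) (σ²_H(0))`, the maximum of two affine functions of `α`.
The slope of `σ²_H(1)` is always nonnegative, while with `s = e^{ε/2}` the slope of `σ²_H(0)` has
the sign of `-(3s³ - s² + s - 7)`. Cardano's formula shows that `e^{ε*/2}` is the unique real
root of this cubic. For `ε ≤ ε*` both lines are minimised at `α = 0`; for `ε > ε*` the lines
cross at `α = 1 - e^{-ε/2}`, which minimises their maximum.
-/

lemma sSup_image_Icc_quadratic (a b : ℝ) :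
    sSup ((fun t : ℝ => a * t ^ 2 + b) '' Set.Icc (-1) 1) = max (a + b) b := by
  refine IsGreatest.csSup_eq ⟨?_, ?_⟩
  · rcases le_total b (a + b) with h | h
    · exact ⟨1, by norm_num, by simp [max_eq_left h]⟩
    · exact ⟨0, by norm_num, by simp [max_eq_right h]⟩
  · rintro _ ⟨t, ⟨ht₁, ht₂⟩, rfl⟩
    have ht : t ^ 2 ≤ 1 := by nlinarith
    rcases le_total 0 a with ha | ha
    · exact le_max_of_le_left (by nlinarith)
    · exact le_max_of_le_right (by nlinarith [sq_nonneg t])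

lemma hmVar_eq_quadratic (t ε α : ℝ) :
    hmVar t ε α = (hmVar 1 ε α - hmVar 0 ε α) * t ^ 2 + hmVar 0 ε α := by
  unfold hmVar pmVar duchiVar; ring

lemma hmMaxVar_eq_max (ε α : ℝ) : hmMaxVar ε α = max (hmVar 1 ε α) (hmVar 0 ε α) := by
  rw [hmMaxVar, funext fun t => hmVar_eq_quadratic t ε α, sSup_image_Icc_quadratic,
    sub_add_cancel]

lemma hmVar_eq_affine (t ε α : ℝ) :
    hmVar t ε α = duchiVar t ε + α * (pmVar t ε - duchiVar t ε) := by
  unfold hmVar; ring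

lemma monotone_hmVar {t ε : ℝ} (h : duchiVar t ε ≤ pmVar t ε) : Monotone (hmVar t ε) := by
  intro α β hαβ
  simp only [hmVar_eq_affine]
  nlinarith

lemma antitone_hmVar {t ε : ℝ} (h : pmVar t ε ≤ duchiVar t ε) : Antitone (hmVar t ε) := by
  intro α β hαβ
  simp only [hmVar_eq_affine]
  nlinarith

lemma exp_eq_exp_half_sq (ε : ℝ) : exp ε = exp (ε / 2) ^ 2 := by
  rw [← exp_nat_mul]; congr 1; ring

lemma duchiVar_one_le_pmVar_one {ε : ℝ} (hε : 0 < ε) : duchiVar 1 ε ≤ pmVar 1 ε := by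
  have hs : 1 < exp (ε / 2) := one_lt_exp_iff.mpr (half_pos hε)
  rw [pmVar, duchiVar, exp_eq_exp_half_sq ε]
  generalize exp (ε / 2) = s at hs
  have hs₀ : s - 1 ≠ 0 := sub_ne_zero.2 hs.ne'
  have key : 1 ^ 2 / (s - 1) + (s + 3) / (3 * (s - 1) ^ 2)
        - (((s ^ 2 + 1) / (s ^ 2 - 1)) ^ 2 - 1 ^ 2)
      = 4 * s * (s ^ 2 - s + 1) / (3 * (s - 1) ^ 2 * (s + 1) ^ 2) := by
    rw [show s ^ 2 - 1 = (s - 1) * (s + 1) by ring]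
    field_simp
    ring
  rw [← sub_nonneg, key]
  exact div_nonneg (by nlinarith) (by positivity)

def epsStarCubic (s : ℝ) : ℝ := 3 * s ^ 3 - s ^ 2 + s - 7

lemma strictMono_epsStarCubic : StrictMono epsStarCubic := by
  intro x y hxy
  have : 0 < 3 * (x ^ 2 + x * y + y ^ 2) - (x + y) + 1 := by
    nlinarith [sq_nonneg (x - y), sq_nonneg (3 * (x + y) - 2)]
  unfold epsStarCubic
  nlinarith [mul_pos (sub_pos.2 hxy) this]

lemma pmVar_zero_sub_duchiVar_zero {ε : ℝ} (hε : 0 < ε) :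
    pmVar 0 ε - duchiVar 0 ε =
      exp (ε / 2) * -epsStarCubic (exp (ε / 2)) /
        (3 * (exp (ε / 2) - 1) ^ 2 * (exp (ε / 2) + 1) ^ 2) := by
  have hs : 1 < exp (ε / 2) := one_lt_exp_iff.mpr (half_pos hε)
  rw [pmVar, duchiVar, exp_eq_exp_half_sq ε, epsStarCubic]
  generalize exp (ε / 2) = s at hs
  have hs₀ : s - 1 ≠ 0 := sub_ne_zero.2 hs.ne'

  rw [show s ^ 2 - 1 = (s - 1) * (s + 1) by ring]
  field_simp
  ring

lemma rpow_one_third_pow_three {x : ℝ} (hx : 0 ≤ x) : (x ^ (1 / 3 : ℝ)) ^ 3 = x := by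
  simpa using rpow_inv_natCast_pow hx three_ne_zero

noncomputable def cardanoRoot : ℝ :=
  (6353 - 405 * √241) ^ (1 / 3 : ℝ) + (6353 + 405 * √241) ^ (1 / 3 : ℝ)

lemma mul_sqrt_241_le : 405 * √241 ≤ 6353 := by
  nlinarith [sq_sqrt (show (0 : ℝ) ≤ 241 by norm_num), sqrt_nonneg 241]

lemma cardanoRoot_cube : cardanoRoot ^ 3 = 282 * cardanoRoot + 12706 := by
  have h241 : √241 ^ 2 = 241 := sq_sqrt (by norm_num)
  have hA : 0 ≤ 6353 - 405 * √241 := sub_nonneg.2 mul_sqrt_241_le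
  have hB : 0 ≤ 6353 + 405 * √241 := by positivity
  have hAB :
      (6353 - 405 * √241) ^ (1 / 3 : ℝ) * (6353 + 405 * √241) ^ (1 / 3 : ℝ) = 94 := by
    rw [← mul_rpow hA hB, show (6353 - 405 * √241) * (6353 + 405 * √241) = 94 ^ 3 by
      linear_combination (-164025 : ℝ) * h241]
    simpa using pow_rpow_inv_natCast (by norm_num : (0 : ℝ) ≤ 94) three_ne_zero
  have hA₃ := rpow_one_third_pow_three hA
  have hB₃ := rpow_one_third_pow_three hB
  rw [cardanoRoot]
  generalize (6353 - 405 * √241) ^ (1 / 3 : ℝ) = a at hA₃ hAB ⊢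
  generalize (6353 + 405 * √241) ^ (1 / 3 : ℝ) = b at hB₃ hAB ⊢
  linear_combination hA₃ + hB₃ + 3 * (a + b) * hAB

lemma sixteen_lt_cardanoRoot : 16 < cardanoRoot := by
  have h₀ : 0 ≤ cardanoRoot :=
    add_nonneg (rpow_nonneg (sub_nonneg.2 mul_sqrt_241_le) _) (rpow_nonneg (by positivity) _)
  nlinarith [cardanoRoot_cube, sq_nonneg cardanoRoot]

lemma exp_epsStar : exp epsStar = (2 * cardanoRoot - 5) / 27 := by
  have h : (-5 + 2 * (6353 - 405 * √241) ^ (1 / 3 : ℝ) + 2 * (6353 + 405 * √241) ^ (1 / 3 : ℝ))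
      / 27 = (2 * cardanoRoot - 5) / 27 := by
    rw [cardanoRoot]; ring
  rw [epsStar, h, exp_log (by linarith [sixteen_lt_cardanoRoot])]

lemma exp_epsStar_cubic :
    9 * exp epsStar ^ 3 + 5 * exp epsStar ^ 2 - 13 * exp epsStar - 49 = 0 := by
  rw [exp_epsStar]
  linear_combination (8 / 2187 : ℝ) * cardanoRoot_cube

lemma epsStarCubic_exp_half_epsStar : epsStarCubic (exp (epsStar / 2)) = 0 := by
  have h := exp_epsStar_cubic
  rw [exp_eq_exp_half_sq epsStar] at h
  have hfactor : epsStarCubic (exp (epsStar / 2)) *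
      (3 * exp (epsStar / 2) ^ 3 + exp (epsStar / 2) ^ 2 + exp (epsStar / 2) + 7) = 0 := by
    unfold epsStarCubic
    linear_combination h
  exact (mul_eq_zero.1 hfactor).resolve_right (by positivity)

lemma epsStarCubic_exp_half_nonpos_iff {ε : ℝ} :
    epsStarCubic (exp (ε / 2)) ≤ 0 ↔ ε ≤ epsStar := by
  rw [← epsStarCubic_exp_half_epsStar, strictMono_epsStarCubic.le_iff_le, exp_le_exp,
    div_le_div_iff_of_pos_right two_pos]

lemma duchiVar_zero_le_pmVar_zero_iff {ε : ℝ} (hε : 0 < ε) :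
    duchiVar 0 ε ≤ pmVar 0 ε ↔ ε ≤ epsStar := by
  have hs : 1 < exp (ε / 2) := one_lt_exp_iff.mpr (half_pos hε)
  rw [← sub_nonneg, pmVar_zero_sub_duchiVar_zero hε, ← epsStarCubic_exp_half_nonpos_iff,
    le_div_iff₀ (by positivity), zero_mul, mul_nonneg_iff_of_pos_left (exp_pos _), neg_nonneg]

lemma hmVar_one_eq_hmVar_zero_at_one_sub_exp_neg {ε : ℝ} (hε : 0 < ε) :
    hmVar 1 ε (1 - exp (-(ε / 2))) = hmVar 0 ε (1 - exp (-(ε / 2))) := by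
  have hs : 1 < exp (ε / 2) := one_lt_exp_iff.mpr (half_pos hε)
  rw [hmVar, hmVar, pmVar, pmVar, duchiVar, duchiVar, exp_neg]
  generalize exp (ε / 2) = s at hs
  have hs₀ : s - 1 ≠ 0 := sub_ne_zero.2 hs.ne'
  field_simp
  ring

/-- `α = α*(ε)` minimizes the worst-case noise variance of the Hybrid Mechanism. -/
theorem stmt_11 (ε : ℝ) (hε : 0 < ε) (α : ℝ) (hα : α ∈ Set.Icc (0 : ℝ) 1) :
    hmMaxVar ε (alphaStar ε) ≤ hmMaxVar ε α := by
  rw [hmMaxVar_eq_max, hmMaxVar_eq_max]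
  by_cases hcase : ε ≤ epsStar
  · have hmono := monotone_hmVar ((duchiVar_zero_le_pmVar_zero_iff hε).2 hcase)
    have hd : hmVar 1 ε 0 ≤ hmVar 0 ε 0 := by simp [hmVar, duchiVar]
    rw [alphaStar, if_neg (not_lt.2 hcase), max_eq_right hd]
    exact le_max_of_le_right (hmono hα.1)
  · set α₀ := 1 - exp (-(ε / 2))
    have hcross : hmVar 1 ε α₀ = hmVar 0 ε α₀ :=
      hmVar_one_eq_hmVar_zero_at_one_sub_exp_neg hε
    have hanti := antitone_hmVar (not_le.1 (mt (duchiVar_zero_le_pmVar_zero_iff hε).1 hcase)).le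
    rw [alphaStar, if_pos (not_le.1 hcase), hcross, max_self]
    rcases le_total α α₀ with h | h
    · exact le_max_of_le_right (hanti h)
    · exact le_max_of_le_left
        (hcross.symm.trans_le (monotone_hmVar (duchiVar_one_le_pmVar_one hε) h))
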